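/- arXiv:2105.05530 — 3 statements merged into one kernel-verified Lean document; each statement's English description precedes it below -/
import Mathlib

section
/- Let c0, c1, c2 be pairwise distinct real numbers and let a0, a1, b0, b1, g0, g1, d0, d1 be nonzero real numbers. Define the 4×2 matrix A with rows (a0, −a0·c0), (b0, −b0·c1), (g0, −g0·c2), (0, d0); the 4×3 matrix G with rows (a1/((c1−c0)(c2−c0)))·(1, −c0, c0²), (b1/((c0−c1)(c2−c1)))·(1, −c1, c1²), (g1/((c0−c2)(c1−c2)))·(1, −c2, c2²), and (0, 0, d1); and the 4×4 matrix B whose columns are (1/(a0·a1))·(c1·c2, c1+c2, 1, 0), (1/(b0·b1))·(c0·c2, c0+c2, 1, 0), (1/(g0·g1))·(c0·c1, c0+c1, 1, 0), and (1/(d0·d1))·(c0·c1·c2, c0·c1+c0·c2+c1·c2, c0+c1+c2, 1). Then for every y ∈ ℝ² (indexed y_0, y_1) and every g ∈ ℝ³ (indexed g_0, g_1, g_2), the vector B · ((A·y) ⊙ (G·g)), where ⊙ denotes the entrywise (Hadamard) product of 4-vectors, equals the linear convolution d ∈ ℝ⁴ given by d_τ = Σ_t y_t · g_{τ−t}, where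 the sum runs over all integers t with 0 ≤ t ≤ 1 and 0 ≤ τ−t ≤ 2, for τ = 0, 1, 2, 3. -/
/-!
`A y` and `G g` evaluate `y(x) = y₀ + y₁x` and `g(x) = g₀ + g₁x + g₂x²` at the nodes
`-c₀, -c₁, -c₂` and at `∞` (leading coefficients), up to nonzero scalings; their entrywise
product is the corresponding data of the convolution polynomial `y(x) g(x)`, and `B` undoes the
scalings and recovers the coefficients of this cubic by Lagrange interpolation.
-/

open Matrix

def evalCoeffs {R : Type*} [Semiring R] {n : ℕ} (p : Fin n → R) (x : R) : R :=
  ∑ i, p i * x ^ (i : ℕ)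

def linearConv {R : Type*} [Semiring R] {m n : ℕ} (y : Fin m → R) (g : Fin n → R) (k : ℕ) :
    Fin k → R :=
  fun τ => ∑ t : Fin m, ∑ r : Fin n, if (t : ℕ) + (r : ℕ) = (τ : ℕ) then y t * g r else 0

theorem evalCoeffs_linearConv {R : Type*} [CommSemiring R] {m n k : ℕ} (hk : m + n ≤ k + 1)
    (y : Fin m → R) (g : Fin n → R) (x : R) :
    evalCoeffs (linearConv y g k) x = evalCoeffs y x * evalCoeffs g x := by
  have hsum : ∀ (t : Fin m) (r : Fin n),
      ∑ τ : Fin k, (if (t : ℕ) + r = τ then y t * g r else 0) * x ^ (τ : ℕ)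
        = y t * x ^ (t : ℕ) * (g r * x ^ (r : ℕ)) := by
    intro t r
    have hlt : (t : ℕ) + r < k := by omega
    rw [Finset.sum_eq_single ⟨_, hlt⟩ (fun τ _ hτ => by
      rw [if_neg (fun h => hτ (Fin.ext h.symm)), zero_mul]) (by simp)]
    simp only [if_pos, pow_add]
    ring
  simp only [evalCoeffs, linearConv]
  rw [Finset.sum_mul_sum]
  simp only [Finset.sum_mul]
  rw [Finset.sum_comm]
  refine Finset.sum_congr rfl fun t _ => ?_
  rw [Finset.sum_comm]
  exact Finset.sum_congr rfl fun r _ => hsum t r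

theorem mul_diagonal_inv_mulVec_mul {K : Type*} [Field K] {m n : Type*} [Fintype n]
    [DecidableEq n] (M : Matrix m n K) {s : n → K} (hs : ∀ i, s i ≠ 0) (w : n → K) :
    (M * diagonal s⁻¹) *ᵥ (s * w) = M *ᵥ w := by
  ext i
  simp only [mulVec, dotProduct, mul_diagonal, Pi.mul_apply, Pi.inv_apply]
  refine Finset.sum_congr rfl fun j _ => ?_
  field_simp [hs j]

section ToomCook

variable {K : Type*} [Field K]

/-- Column `i < 3` holds the coefficients of `∏_{j ≠ i} (X + cⱼ)` and the last column those of
`∏ⱼ (X + cⱼ)`, so multiplying by it is Lagrange interpolation at the nodes `-cᵢ`, corrected by the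
leading coefficient times the nodal polynomial. -/
def toomCookMatrix (c0 c1 c2 : K) : Matrix (Fin 4) (Fin 4) K :=
  !![c1 * c2, c0 * c2, c0 * c1, c0 * c1 * c2;
     c1 + c2, c0 + c2, c0 + c1, c0 * c1 + c0 * c2 + c1 * c2;
     1, 1, 1, c0 + c1 + c2;
     0, 0, 0, 1]

def toomCookValues (c0 c1 c2 : K) (p : Fin 4 → K) : Fin 4 → K :=
  ![evalCoeffs p (-c0) / ((c1 - c0) * (c2 - c0)),
    evalCoeffs p (-c1) / ((c0 - c1) * (c2 - c1)),
    evalCoeffs p (-c2) / ((c0 - c2) * (c1 - c2)),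
    p 3]

theorem toomCookMatrix_mulVec_toomCookValues {c0 c1 c2 : K}
    (hc01 : c0 ≠ c1) (hc02 : c0 ≠ c2) (hc12 : c1 ≠ c2) (p : Fin 4 → K) :
    toomCookMatrix c0 c1 c2 *ᵥ toomCookValues c0 c1 c2 p = p := by
  have h01 := sub_ne_zero.mpr hc01
  have h02 := sub_ne_zero.mpr hc02
  have h12 := sub_ne_zero.mpr hc12
  have h10 := sub_ne_zero.mpr hc01.symm
  have h20 := sub_ne_zero.mpr hc02.symm
  have h21 := sub_ne_zero.mpr hc12.symm
  ext k
  fin_cases k <;>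
    simp [toomCookMatrix, toomCookValues, evalCoeffs, mulVec, dotProduct, Fin.sum_univ_succ] <;>
    · field_simp
      ring

end ToomCook

/-- general Winograd `F(2,3)` solution, 1-D linear convolution form.
`B ⬝ ((A ⬝ y) ⊙ (G ⬝ g))` equals the linear convolution of `y` and `g`. -/
theorem winograd_F23_general_convolution
    (c0 c1 c2 : ℝ) (hc01 : c0 ≠ c1) (hc02 : c0 ≠ c2) (hc12 : c1 ≠ c2)
    (a0 a1 b0 b1 g0 g1 d0 d1 : ℝ)
    (ha0 : a0 ≠ 0) (ha1 : a1 ≠ 0) (hb0 : b0 ≠ 0) (hb1 : b1 ≠ 0)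
    (hg0 : g0 ≠ 0) (hg1 : g1 ≠ 0) (hd0 : d0 ≠ 0) (hd1 : d1 ≠ 0)
    (A : Matrix (Fin 4) (Fin 2) ℝ)
    (hA : A = !![a0, -a0 * c0; b0, -b0 * c1; g0, -g0 * c2; 0, d0])
    (G : Matrix (Fin 4) (Fin 3) ℝ)
    (hG : G = !![a1 / ((c1 - c0) * (c2 - c0)), -(a1 * c0) / ((c1 - c0) * (c2 - c0)),
                   (a1 * c0 ^ 2) / ((c1 - c0) * (c2 - c0));
                 b1 / ((c0 - c1) * (c2 - c1)), -(b1 * c1) / ((c0 - c1) * (c2 - c1)),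
                   (b1 * c1 ^ 2) / ((c0 - c1) * (c2 - c1));
                 g1 / ((c0 - c2) * (c1 - c2)), -(g1 * c2) / ((c0 - c2) * (c1 - c2)),
                   (g1 * c2 ^ 2) / ((c0 - c2) * (c1 - c2));
                 0, 0, d1])
    (B : Matrix (Fin 4) (Fin 4) ℝ)
    (hB : B = !![c1 * c2 / (a0 * a1), c0 * c2 / (b0 * b1), c0 * c1 / (g0 * g1),
                   c0 * c1 * c2 / (d0 * d1);
                 (c1 + c2) / (a0 * a1), (c0 + c2) / (b0 * b1), (c0 + c1) / (g0 * g1),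
                   (c0 * c1 + c0 * c2 + c1 * c2) / (d0 * d1);
                 1 / (a0 * a1), 1 / (b0 * b1), 1 / (g0 * g1),
                   (c0 + c1 + c2) / (d0 * d1);
                 0, 0, 0, 1 / (d0 * d1)])
    (y : Fin 2 → ℝ) (g : Fin 3 → ℝ) :
    B.mulVec (fun i => (A.mulVec y) i * (G.mulVec g) i) =
      fun τ : Fin 4 => ∑ t : Fin 2, ∑ r : Fin 3,
        if (t : ℕ) + (r : ℕ) = (τ : ℕ) then y t * g r else 0 := by
  set s : Fin 4 → ℝ := ![a0 * a1, b0 * b1, g0 * g1, d0 * d1]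
  have hs : ∀ i, s i ≠ 0 := by
    intro i
    fin_cases i <;> simp [s, ha0, ha1, hb0, hb1, hg0, hg1, hd0, hd1]
  have hB' : B = toomCookMatrix c0 c1 c2 * diagonal s⁻¹ := by
    subst hB
    ext i j
    fin_cases i <;> fin_cases j <;> simp [s, toomCookMatrix, div_eq_mul_inv]
  have hAG : (fun i => (A *ᵥ y) i * (G *ᵥ g) i)
      = s * toomCookValues c0 c1 c2 (linearConv y g 4) := by
    simp only [toomCookValues, evalCoeffs_linearConv (by norm_num : 2 + 3 ≤ 4 + 1)]
    ext i
    fin_cases i <;>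
    · simp [s, hA, hG, evalCoeffs, linearConv, mulVec, dotProduct, Fin.sum_univ_succ]
      ring
  rw [hB', hAG, mul_diagonal_inv_mulVec_mul _ hs,
    toomCookMatrix_mulVec_toomCookValues hc01 hc02 hc12]
  rfl
end

section
/- Let k be an integer, let ι be an index type, and let p : ι → ℤ. Then the following are equivalent: (1) for all i, j, m, n in ι, p_i·p_j + (k − p_i)·(k − p_j) = p_m·p_n + (k − p_m)·(k − p_n); (2) for all i, j in ι, p_i = p_j. (In the application, each column of the output transform matrix A has exactly k nonzero entries, each equal to +1 or −1, p_i is the number of +1 entries in column i, and p_i·p_j + (k−p_i)·(k−p_j) counts the addition terms (positively signed products) arising when the output feature Y_{i,j} = (AᵀXA)_{i,j} is expanded; the equivalence says the numbers of additions and of minus operations in the computation of Y_{i,j} and Y_{m,n} are equal for all i, j, m, n if and only if all the p_i are equal.) -/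
section

variable {R : Type*} [CommRing R]

theorem mul_add_sub_mul_sub_polarization (k a b : R) :
    (a * a + (k - a) * (k - a)) + (b * b + (k - b) * (k - b))
        - 2 * (a * b + (k - a) * (k - b)) = 2 * (a - b) ^ 2 := by
  ring

theorem eq_of_mul_add_sub_mul_sub_eq [NoZeroDivisors R] [CharZero R] {k a b : R}
    (ha : a * a + (k - a) * (k - a) = a * b + (k - a) * (k - b))
    (hb : b * b + (k - b) * (k - b) = a * b + (k - a) * (k - b)) : a = b := by
  have hsq : 2 * (a - b) ^ 2 = 0 := by
    rw [← mul_add_sub_mul_sub_polarization k, ha, hb]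
    ring
  simpa [sub_eq_zero] using hsq

end

/-- Theorem 2 of the paper: for `p : ι → ℤ` and `k : ℤ`, the counts
`p i * p j + (k - p i) * (k - p j)` of positively signed terms in the expansion of
the output features agree for all index pairs if and only if all the `p i` are equal. -/
theorem adder_winograd_balance_iff (k : ℤ) (ι : Type*) (p : ι → ℤ) :
    (∀ i j m n : ι,
        p i * p j + (k - p i) * (k - p j) = p m * p n + (k - p m) * (k - p n)) ↔
      (∀ i j : ι, p i = p j) := by
  constructor
  · intro h i j
    exact eq_of_mul_add_sub_mul_sub_eq (h i i i j) (h j j i j)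
  · intro h i j m n
    rw [h i m, h j n]
end

section
/- Let A be the 4×2 real matrix with rows (1,0), (1,1), (1,−1), (0,−1); let G be the 4×3 real matrix with rows (1,0,0), (1/2,1/2,1/2), (1/2,−1/2,1/2), (0,0,1); and let B be the 4×4 real matrix with rows (1,0,0,0), (0,1,−1,1), (−1,1,1,0), (0,0,0,−1). There exist a 3×3 real matrix g and a 4×4 real matrix d such that the 2×2 matrix Aᵀ·(−|G·g·Gᵀ ⊖ Bᵀ·d·B|)·A, where ⊖ denotes entrywise subtraction and |·| denotes the entrywise absolute value of a 4×4 matrix, is NOT equal to the 2×2 adder output Y given by Y_{m,n} = −Σ_{i=0}^{2} Σ_{j=0}^{2} |g_{i,j} − d_{m+i, n+j}| for m, n ∈ {0, 1}. -/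
/-!
Take the all-ones filter `g = 𝟙𝟙ᵀ` and the zero tile `d = 0`. Then `G g Gᵀ = u uᵀ` with
`u = G𝟙 = (1, 3/2, 1/2, 1) ≥ 0`, so the absolute value acts trivially and the Winograd form is
`-(Aᵀu)(Aᵀu)ᵀ`. As `Aᵀu = (3, 0)`, its off-diagonal entries vanish, while every entry of the adder
output is `-9`.
-/

open Matrix

theorem Matrix.mul_vecMulVec_mul {l m n k α : Type*} [CommSemiring α] [Fintype m] [Fintype n]
    (M : Matrix l m α) (x : m → α) (y : n → α) (N : Matrix n k α) :
    M * vecMulVec x y * N = vecMulVec (M *ᵥ x) (Nᵀ *ᵥ y) := by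
  rw [mul_vecMulVec, vecMulVec_mul, mulVec_transpose]

theorem Matrix.transpose_mul_neg_abs_vecMulVec_self_mul {m n α : Type*} [CommRing α]
    [LinearOrder α] [IsStrictOrderedRing α] [Fintype m] (A : Matrix m n α) {u : m → α}
    (hu : 0 ≤ u) :
    Aᵀ * of (fun i j => -|vecMulVec u u i j|) * A = -vecMulVec (Aᵀ *ᵥ u) (Aᵀ *ᵥ u) := by
  have habs : of (fun i j => -|vecMulVec u u i j|) = -vecMulVec u u := by
    ext i j
    rw [of_apply, neg_apply, vecMulVec_apply, abs_of_nonneg (mul_nonneg (hu i) (hu j))]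
  rw [habs, Matrix.mul_neg, Matrix.neg_mul, mul_vecMulVec_mul]

/-- the vanilla Winograd form for AdderNet, obtained by replacing
elementwise multiplication with the negated elementwise ℓ1-distance, is not equal
to the original adder operation: there exist a filter `g` and an input tile `d`
witnessing the inequality. -/
theorem winograd_adder_not_exact
    (A : Matrix (Fin 4) (Fin 2) ℝ)
    (hA : A = !![1, 0; 1, 1; 1, -1; 0, -1])
    (G : Matrix (Fin 4) (Fin 3) ℝ)
    (hG : G = !![1, 0, 0; 1/2, 1/2, 1/2; 1/2, -1/2, 1/2; 0, 0, 1])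
    (B : Matrix (Fin 4) (Fin 4) ℝ) :
    ∃ (g : Matrix (Fin 3) (Fin 3) ℝ) (d : Matrix (Fin 4) (Fin 4) ℝ),
      Aᵀ * (Matrix.of fun i j : Fin 4 =>
          -|(G * g * Gᵀ - Bᵀ * d * B) i j|) * A ≠
        Matrix.of (fun m n : Fin 2 => -∑ i : Fin 3, ∑ j : Fin 3,
          |g i j - d ⟨(m : ℕ) + (i : ℕ), by omega⟩ ⟨(n : ℕ) + (j : ℕ), by omega⟩|) := by
  let ones : Matrix (Fin 3) (Fin 3) ℝ := vecMulVec 1 1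
  let u : Fin 4 → ℝ := ![1, 3/2, 1/2, 1]
  have hu : 0 ≤ u := by
    intro i
    fin_cases i <;> norm_num [u]
  have hG_ones : G * ones * Gᵀ = vecMulVec u u := by
    rw [mul_vecMulVec_mul, transpose_transpose, hG]
    congr 1 <;> ext i <;> fin_cases i <;> norm_num [u, mulVec, dotProduct, Fin.sum_univ_succ]
  refine ⟨ones, 0, fun h => ?_⟩
  have h01 := congr_fun₂ h 0 1
  rw [Matrix.mul_zero, Matrix.zero_mul, sub_zero, hG_ones,
    transpose_mul_neg_abs_vecMulVec_self_mul _ hu] at h01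
  norm_num [hA, ones, u, vecMulVec_apply, mulVec, dotProduct, Fin.sum_univ_succ] at h01
end
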